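/- arXiv:2105.06390 — 7 statements merged into one kernel-verified Lean document; each statement's English description precedes it below -/
import Mathlib

section
/- For every fixed k ∈ ℝ, the function v ↦ BS(k,v) is continuous and strictly increasing on (0, ∞), satisfies lim_{v→0⁺} BS(k,v) = max(1−e^k, 0) and lim_{v→∞} BS(k,v) = 1, and is a bijection from (0, ∞) onto the open interval (max(1−e^k,0), 1); hence its inverse BS_k^{-1} : (max(1−e^k,0), 1) → (0, ∞) is well defined. -/
open Real MeasureTheory Set Filter
open scoped ENNReal NNReal

/-- Standard Gaussian density. -/
noncomputable def gaussPdf (x : ℝ) : ℝ := Real.exp (-(x ^ 2) / 2) / Real.sqrt (2 * Real.pi)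

/-- Standard Gaussian cumulative distribution function. -/
noncomputable def gaussCdf (x : ℝ) : ℝ := ∫ t in Set.Iic x, gaussPdf t

noncomputable def dplus (k v : ℝ) : ℝ := -k / v + v / 2
noncomputable def dminus (k v : ℝ) : ℝ := -k / v - v / 2

/-- Black–Scholes call function for `v ∈ (0,∞)`. -/
noncomputable def BS (k v : ℝ) : ℝ :=
  gaussCdf (dplus k v) - Real.exp k * gaussCdf (dminus k v)

/-- Black–Scholes put function for `v ∈ (0,∞)`. -/
noncomputable def BSP (k v : ℝ) : ℝ :=
  Real.exp k * gaussCdf (-(dminus k v)) - gaussCdf (-(dplus k v))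

lemma gaussPdf_pos (x : ℝ) : 0 < gaussPdf x := by
  unfold gaussPdf; positivity

lemma gaussPdf_eq (x : ℝ) : gaussPdf x = Real.exp (-(1/2) * x ^ 2) / Real.sqrt (2 * Real.pi) := by
  unfold gaussPdf; ring_nf

lemma continuous_gaussPdf : Continuous gaussPdf := by
  unfold gaussPdf; fun_prop

lemma integrable_gaussPdf : Integrable gaussPdf := by
  have h : Integrable (fun x : ℝ => Real.exp (-(1/2) * x ^ 2)) :=
    integrable_exp_neg_mul_sq (by norm_num)
  have := h.div_const (Real.sqrt (2 * Real.pi))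
  exact this.congr (by filter_upwards with x using (gaussPdf_eq x).symm)

lemma integral_gaussPdf : ∫ x, gaussPdf x = 1 := by
  have h := integral_gaussian (1/2 : ℝ)
  simp only [gaussPdf_eq]
  rw [integral_div, h]
  rw [show Real.pi / (1/2) = 2 * Real.pi by ring]
  rw [div_self (by positivity)]

lemma gaussCdf_eq (x : ℝ) : gaussCdf x = gaussCdf 0 + ∫ t in (0:ℝ)..x, gaussPdf t := by
  rw [gaussCdf, gaussCdf, ← intervalIntegral.integral_Iic_sub_Iic
    integrable_gaussPdf.integrableOn integrable_gaussPdf.integrableOn]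
  ring

lemma hasDerivAt_gaussCdf (x : ℝ) : HasDerivAt gaussCdf (gaussPdf x) x := by
  have h : HasDerivAt (fun y => gaussCdf 0 + ∫ t in (0:ℝ)..y, gaussPdf t) (gaussPdf x) x := by
    rw [show gaussPdf x = 0 + gaussPdf x by ring]
    refine (hasDerivAt_const x (gaussCdf 0)).add ?_
    exact intervalIntegral.integral_hasDerivAt_right
      integrable_gaussPdf.intervalIntegrable
      continuous_gaussPdf.aestronglyMeasurable.stronglyMeasurableAtFilter
      continuous_gaussPdf.continuousAt
  exact h.congr_of_eventuallyEq (Filter.Eventually.of_forall gaussCdf_eq)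

lemma continuous_gaussCdf : Continuous gaussCdf :=
  continuous_iff_continuousAt.2 fun x => (hasDerivAt_gaussCdf x).continuousAt

lemma tendsto_gaussCdf_atTop : Tendsto gaussCdf atTop (nhds 1) := by
  have h : Tendsto (fun x : ℝ => ∫ t in (0:ℝ)..x, gaussPdf t) atTop
      (nhds (∫ t in Set.Ioi (0:ℝ), gaussPdf t)) :=
    intervalIntegral_tendsto_integral_Ioi 0 integrable_gaussPdf.integrableOn tendsto_id
  have h2 : gaussCdf 0 + ∫ t in Set.Ioi (0:ℝ), gaussPdf t = 1 := by
    rw [gaussCdf, intervalIntegral.integral_Iic_add_Ioi integrable_gaussPdf.integrableOn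
      integrable_gaussPdf.integrableOn, integral_gaussPdf]
  have := (tendsto_const_nhds (x := gaussCdf 0) (f := atTop (α := ℝ))).add h
  rw [h2] at this
  exact this.congr fun x => (gaussCdf_eq x).symm

lemma tendsto_gaussCdf_atBot : Tendsto gaussCdf atBot (nhds 0) := by
  have h : Tendsto (fun x : ℝ => ∫ t in x..(0:ℝ), gaussPdf t) atBot
      (nhds (∫ t in Set.Iic (0:ℝ), gaussPdf t)) :=
    intervalIntegral_tendsto_integral_Iic 0 integrable_gaussPdf.integrableOn tendsto_id
  have := (tendsto_const_nhds (x := gaussCdf 0) (f := atBot (α := ℝ))).sub h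
  rw [show gaussCdf 0 - ∫ t in Set.Iic (0:ℝ), gaussPdf t = 0 by rw [gaussCdf]; ring] at this
  refine this.congr fun x => ?_
  rw [gaussCdf_eq x, intervalIntegral.integral_symm]
  ring

lemma exp_mul_gaussPdf (k v : ℝ) (hv : v ≠ 0) :
    Real.exp k * gaussPdf (dminus k v) = gaussPdf (dplus k v) := by
  unfold gaussPdf dminus dplus
  rw [← mul_div_assoc, ← Real.exp_add]
  congr 2
  field_simp
  ring

lemma hasDerivAt_dplus (k : ℝ) {v : ℝ} (hv : 0 < v) :
    HasDerivAt (fun v => dplus k v) (k / v ^ 2 + 1 / 2) v := by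
  have h1 : HasDerivAt (fun v : ℝ => -k / v) (k / v ^ 2) v := by
    have := (hasDerivAt_inv hv.ne').const_mul (-k)
    simp only [div_eq_mul_inv]
    exact this.congr_deriv (by ring)
  have h2 : HasDerivAt (fun v : ℝ => v / 2) (1 / 2) v := (hasDerivAt_id v).div_const 2
  exact (h1.add h2 : _)

lemma hasDerivAt_dminus (k : ℝ) {v : ℝ} (hv : 0 < v) :
    HasDerivAt (fun v => dminus k v) (k / v ^ 2 - 1 / 2) v := by
  have h1 : HasDerivAt (fun v : ℝ => -k / v) (k / v ^ 2) v := by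
    have := (hasDerivAt_inv hv.ne').const_mul (-k)
    simp only [div_eq_mul_inv]
    exact this.congr_deriv (by ring)
  have h2 : HasDerivAt (fun v : ℝ => v / 2) (1 / 2) v := (hasDerivAt_id v).div_const 2
  exact (h1.sub h2 : _)

lemma hasDerivAt_BS (k : ℝ) {v : ℝ} (hv : 0 < v) :
    HasDerivAt (fun v => BS k v) (gaussPdf (dplus k v)) v := by
  have c1 : HasDerivAt (fun v => gaussCdf (dplus k v))
      (gaussPdf (dplus k v) * (k / v ^ 2 + 1 / 2)) v :=
    (hasDerivAt_gaussCdf (dplus k v)).comp v (hasDerivAt_dplus k hv)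
  have c2 : HasDerivAt (fun v => Real.exp k * gaussCdf (dminus k v))
      (Real.exp k * (gaussPdf (dminus k v) * (k / v ^ 2 - 1 / 2))) v :=
    ((hasDerivAt_gaussCdf (dminus k v)).comp v (hasDerivAt_dminus k hv)).const_mul _
  have := c1.sub c2
  exact this.congr_deriv (by rw [← mul_assoc, exp_mul_gaussPdf k v hv.ne']; ring)

lemma tendsto_BS_atTop (k : ℝ) : Tendsto (fun v => BS k v) atTop (nhds 1) := by
  have hc : Tendsto (fun v : ℝ => -k / v) atTop (nhds 0) := by
    simpa [div_eq_mul_inv] using tendsto_inv_atTop_zero.const_mul (-k)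
  have hp : Tendsto (fun v : ℝ => dplus k v) atTop atTop :=
    hc.add_atTop (tendsto_id.atTop_div_const two_pos)
  have hm : Tendsto (fun v : ℝ => dminus k v) atTop atBot := by
    have : Tendsto (fun v : ℝ => -(v / 2)) atTop atBot :=
      tendsto_neg_atBot_iff.2 (tendsto_id.atTop_div_const two_pos)
    simpa [dminus, sub_eq_add_neg] using hc.add_atBot this
  have h1 := tendsto_gaussCdf_atTop.comp hp
  have h2 := (tendsto_gaussCdf_atBot.comp hm).const_mul (Real.exp k)
  have := h1.sub h2
  simpa [BS] using this

lemma tendsto_BS_zero (k : ℝ) :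
    Tendsto (fun v => BS k v) (nhdsWithin 0 (Set.Ioi 0)) (nhds (max (1 - Real.exp k) 0)) := by
  have hhalf : Tendsto (fun v : ℝ => v / 2) (nhdsWithin 0 (Set.Ioi 0)) (nhds 0) := by
    have : Tendsto (fun v : ℝ => v / 2) (nhds 0) (nhds 0) := by
      simpa using (continuous_id.div_const 2).tendsto (0 : ℝ)
    exact this.mono_left nhdsWithin_le_nhds
  rcases lt_trichotomy k 0 with hk | hk | hk
  · -- k < 0 : both d's → +∞, limit 1 - e^k
    have hc : Tendsto (fun v : ℝ => -k / v) (nhdsWithin 0 (Set.Ioi 0)) atTop := by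
      simpa [div_eq_mul_inv] using tendsto_inv_nhdsGT_zero.const_mul_atTop (by linarith : (0:ℝ) < -k)
    have hp : Tendsto (fun v : ℝ => dplus k v) (nhdsWithin 0 (Set.Ioi 0)) atTop :=
      hc.atTop_add hhalf
    have hm : Tendsto (fun v : ℝ => dminus k v) (nhdsWithin 0 (Set.Ioi 0)) atTop :=
      hc.atTop_add hhalf.neg
    have h1 := tendsto_gaussCdf_atTop.comp hp
    have h2 := (tendsto_gaussCdf_atTop.comp hm).const_mul (Real.exp k)
    have h := h1.sub h2
    rw [max_eq_left (by nlinarith [Real.exp_lt_one_iff.2 hk] : (0:ℝ) ≤ 1 - Real.exp k)]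
    simpa [BS] using h
  · -- k = 0
    subst hk
    have hp : Tendsto (fun v : ℝ => dplus 0 v) (nhdsWithin 0 (Set.Ioi 0)) (nhds 0) := by
      simpa [dplus] using hhalf
    have hm : Tendsto (fun v : ℝ => dminus 0 v) (nhdsWithin 0 (Set.Ioi 0)) (nhds 0) := by
      simpa [dminus] using hhalf.neg
    have h1 := (continuous_gaussCdf.tendsto 0).comp hp
    have h2 := ((continuous_gaussCdf.tendsto 0).comp hm).const_mul (Real.exp 0)
    have h := h1.sub h2
    simp only [Function.comp, Real.exp_zero, one_mul] at h ⊢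
    simpa [BS] using h
  · -- k > 0 : both d's → -∞, limit 0
    have hc : Tendsto (fun v : ℝ => -k / v) (nhdsWithin 0 (Set.Ioi 0)) atBot := by
      have := tendsto_inv_nhdsGT_zero.const_mul_atTop (hk : (0:ℝ) < k)
      have h2 := tendsto_neg_atBot_iff.2 this
      refine h2.congr fun v => ?_
      field_simp
    have hp : Tendsto (fun v : ℝ => dplus k v) (nhdsWithin 0 (Set.Ioi 0)) atBot :=
      hc.atBot_add hhalf
    have hm : Tendsto (fun v : ℝ => dminus k v) (nhdsWithin 0 (Set.Ioi 0)) atBot :=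
      hc.atBot_add hhalf.neg
    have h1 := tendsto_gaussCdf_atBot.comp hp
    have h2 := (tendsto_gaussCdf_atBot.comp hm).const_mul (Real.exp k)
    have h := h1.sub h2
    rw [max_eq_right (by nlinarith [Real.one_lt_exp_iff.2 hk] : 1 - Real.exp k ≤ (0:ℝ))]
    simpa [BS] using h

/-- For every fixed `k`, `v ↦ BS(k,v)` is continuous and strictly increasing on `(0,∞)`,
tends to `max (1 - e^k) 0` as `v → 0⁺` and to `1` as `v → ∞`, and is a bijection from
`(0,∞)` onto `(max (1 - e^k) 0, 1)`; hence its inverse is well defined. -/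
theorem BS_strictMono_bijOn (k : ℝ) :
    ContinuousOn (fun v => BS k v) (Set.Ioi 0) ∧
    StrictMonoOn (fun v => BS k v) (Set.Ioi 0) ∧
    Tendsto (fun v => BS k v) (nhdsWithin 0 (Set.Ioi 0)) (nhds (max (1 - Real.exp k) 0)) ∧
    Tendsto (fun v => BS k v) atTop (nhds 1) ∧
    Set.BijOn (fun v => BS k v) (Set.Ioi 0) (Set.Ioo (max (1 - Real.exp k) 0) 1) := by
  have hcont : ContinuousOn (fun v => BS k v) (Set.Ioi 0) := fun v hv =>
    ((hasDerivAt_BS k hv).continuousAt).continuousWithinAt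
  have hmono : StrictMonoOn (fun v => BS k v) (Set.Ioi 0) := by
    refine strictMonoOn_of_deriv_pos (convex_Ioi 0) hcont fun v hv => ?_
    rw [interior_Ioi] at hv
    rw [(hasDerivAt_BS k hv).deriv]
    exact gaussPdf_pos _
  have hmonoLe := hmono.monotoneOn
  -- BS v < 1 for v > 0
  have hlt1 : ∀ v ∈ Set.Ioi (0:ℝ), BS k v < 1 := by
    intro v hv
    have hv' : (0:ℝ) < v := hv
    have h1 : BS k (v + 1) ≤ 1 := by
      refine ge_of_tendsto (tendsto_BS_atTop k) ?_
      filter_upwards [eventually_ge_atTop (v + 1)] with u hu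
      exact hmonoLe (Set.mem_Ioi.2 (by linarith)) (Set.mem_Ioi.2 (by linarith)) hu
    exact lt_of_lt_of_le (hmono hv (Set.mem_Ioi.2 (by linarith)) (by linarith)) h1
  -- max < BS v for v > 0
  have hgt : ∀ v ∈ Set.Ioi (0:ℝ), max (1 - Real.exp k) 0 < BS k v := by
    intro v hv
    have hv' : (0:ℝ) < v := hv
    have hw : (0:ℝ) < v / 2 := by linarith
    have h1 : max (1 - Real.exp k) 0 ≤ BS k (v / 2) := by
      refine le_of_tendsto (tendsto_BS_zero k) ?_
      filter_upwards [Ioo_mem_nhdsGT_of_mem (Set.left_mem_Ico.2 hw)] with u hu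
      exact hmonoLe hu.1 hw hu.2.le
    exact lt_of_le_of_lt h1 (hmono hw hv (by linarith))
  refine ⟨hcont, hmono, tendsto_BS_zero k, tendsto_BS_atTop k, ?_, hmono.injOn, ?_⟩
  · exact fun v hv => ⟨hgt v hv, hlt1 v hv⟩
  · -- surjOn
    intro y hy
    obtain ⟨hy1, hy2⟩ := hy
    -- find a with BS a < y
    have ha : ∃ a ∈ Set.Ioi (0:ℝ), BS k a < y := by
      have h := (tendsto_BS_zero k).eventually (eventually_lt_nhds hy1)
      rcases (h.and self_mem_nhdsWithin).exists with ⟨a, ha1, ha2⟩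
      exact ⟨a, ha2, ha1⟩
    have hb : ∃ b ∈ Set.Ioi (0:ℝ), y < BS k b := by
      have h := (tendsto_BS_atTop k).eventually (eventually_gt_nhds hy2)
      rcases (h.and (eventually_gt_atTop 0)).exists with ⟨b, hb1, hb2⟩
      exact ⟨b, hb2, hb1⟩
    obtain ⟨a, ha0, hay⟩ := ha
    obtain ⟨b, hb0, hby⟩ := hb
    have hab : a < b := by
      by_contra h
      push_neg at h
      exact absurd (hmonoLe hb0 ha0 h) (by linarith)
    have hsub : Set.Icc a b ⊆ Set.Ioi 0 := fun x hx => lt_of_lt_of_le ha0 hx.1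
    have := intermediate_value_Ioo hab.le (hcont.mono hsub)
    have hy3 : y ∈ Set.Ioo (BS k a) (BS k b) := ⟨hay, hby⟩
    obtain ⟨x, hx, hxy⟩ := this hy3
    exact ⟨x, lt_trans ha0 hx.1, hxy⟩
end

section
/- Fix S > 0, K > 0, ω > 0, and set k := log(K/S), d₊ := d₊(k, √ω), d₋ := d₋(k, √ω). For all real numbers a, b, c the following equivalence holds (this is the algebraic core of the no-drift condition): a·K·φ(d₋)/(2√ω) + c·K·(k + ω/2)·φ(d₋)/(2√ω) + (b² + c²)·K·(k² − ω²/4 − ω)·φ(d₋)/(8√ω) + S·φ(d₊)/(2√ω) = 0 if and only if a = ((b² + c²)/16)·ω² + ((b² + c² − 2c)/4)·ω − [((b² + c²)/4)·k² + c·k + 1]. -/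
open Real MeasureTheory Set Filter
open scoped ENNReal NNReal

/-- Algebraic core of the no-drift condition: with `S, K, ω > 0`, `k = log(K/S)`,
`d₊ = d₊(k,√ω)`, `d₋ = d₋(k,√ω)`, for all reals `a, b, c`, the drift of the stopped
Black–Scholes call price vanishes iff `a` equals the no-drift expression. -/
theorem no_drift_condition_iff (S K ω : ℝ) (hS : 0 < S) (hK : 0 < K) (hω : 0 < ω)
    (k : ℝ) (hk : k = Real.log (K / S)) (a b c : ℝ) :
    (a * K * gaussPdf (dminus k (Real.sqrt ω)) / (2 * Real.sqrt ω)
        + c * K * (k + ω / 2) * gaussPdf (dminus k (Real.sqrt ω)) / (2 * Real.sqrt ω)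
        + (b ^ 2 + c ^ 2) * K * (k ^ 2 - ω ^ 2 / 4 - ω) * gaussPdf (dminus k (Real.sqrt ω))
            / (8 * Real.sqrt ω)
        + S * gaussPdf (dplus k (Real.sqrt ω)) / (2 * Real.sqrt ω) = 0)
      ↔ a = ((b ^ 2 + c ^ 2) / 16) * ω ^ 2 + ((b ^ 2 + c ^ 2 - 2 * c) / 4) * ω
            - (((b ^ 2 + c ^ 2) / 4) * k ^ 2 + c * k + 1) := by

  have hv : (0:ℝ) < Real.sqrt ω := Real.sqrt_pos.mpr hω
  set v := Real.sqrt ω with hvdef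
  have hvne : v ≠ 0 := ne_of_gt hv
  have hsq : dplus k v ^ 2 = dminus k v ^ 2 - 2 * k := by
    unfold dplus dminus; field_simp; ring
  have hek : Real.exp k = K / S := by
    rw [hk, Real.exp_log (by positivity)]
  have hpdf : gaussPdf (dplus k v) = (K / S) * gaussPdf (dminus k v) := by
    unfold gaussPdf
    rw [hsq, ← hek,
      show (-(dminus k v ^ 2 - 2 * k) / 2) = k + (-(dminus k v ^ 2) / 2) by ring,
      Real.exp_add]
    ring
  have hD : 0 < gaussPdf (dminus k v) := by
    unfold gaussPdf; positivity
  have key : a * K * gaussPdf (dminus k v) / (2 * v)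
        + c * K * (k + ω / 2) * gaussPdf (dminus k v) / (2 * v)
        + (b ^ 2 + c ^ 2) * K * (k ^ 2 - ω ^ 2 / 4 - ω) * gaussPdf (dminus k v) / (8 * v)
        + S * gaussPdf (dplus k v) / (2 * v)
      = (a - (((b ^ 2 + c ^ 2) / 16) * ω ^ 2 + ((b ^ 2 + c ^ 2 - 2 * c) / 4) * ω
            - (((b ^ 2 + c ^ 2) / 4) * k ^ 2 + c * k + 1)))
          * (K * gaussPdf (dminus k v) / (2 * v)) := by
    rw [hpdf]
    field_simp
    ring
  rw [key, mul_eq_zero]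
  have h2 : K * gaussPdf (dminus k v) / (2 * v) ≠ 0 := by positivity
  simp [h2, sub_eq_zero]
end

section
/- Let ρ, a₀, a₁, k ∈ ℝ with a₀ > ρ² and 1 − 2ρ + 4a₁ ≥ 0. Set D(k) := k² + 4ρk + 4a₀ + (1 − 2ρ + 4a₁)². Then x* := 2·(2ρ − 1 − 4a₁ + √D(k)) is strictly positive, satisfies the quadratic equation x² + 4(1 − 2ρ + 4a₁)·x − 4·(4a₀ + 4ρk + k²) = 0, and is the unique positive solution of that equation. -/
/-- With `a₀ > ρ²` and `1 − 2ρ + 4a₁ ≥ 0`, setting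
`D(k) = k² + 4ρk + 4a₀ + (1 − 2ρ + 4a₁)²`, the value
`x* = 2(2ρ − 1 − 4a₁ + √D(k))` is strictly positive, solves the quadratic
`x² + 4(1 − 2ρ + 4a₁)x − 4(4a₀ + 4ρk + k²) = 0`, and is its unique positive solution. -/
theorem carr_sun_unique_positive_root (ρ a₀ a₁ k : ℝ)
    (h₀ : ρ ^ 2 < a₀) (h₁ : 0 ≤ 1 - 2 * ρ + 4 * a₁)
    (D x : ℝ)
    (hD : D = k ^ 2 + 4 * ρ * k + 4 * a₀ + (1 - 2 * ρ + 4 * a₁) ^ 2)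
    (hx : x = 2 * (2 * ρ - 1 - 4 * a₁ + Real.sqrt D)) :
    0 < x ∧
    x ^ 2 + 4 * (1 - 2 * ρ + 4 * a₁) * x - 4 * (4 * a₀ + 4 * ρ * k + k ^ 2) = 0 ∧
    ∀ y : ℝ, 0 < y →
      y ^ 2 + 4 * (1 - 2 * ρ + 4 * a₁) * y - 4 * (4 * a₀ + 4 * ρ * k + k ^ 2) = 0 →
      y = x := by
  set b := 1 - 2 * ρ + 4 * a₁ with hb
  set s := Real.sqrt D with hs
  have hDpos : 0 < D := by
    have h1 : k ^ 2 + 4 * ρ * k + 4 * a₀ = (k + 2 * ρ) ^ 2 + 4 * (a₀ - ρ ^ 2) := by ring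
    nlinarith [sq_nonneg (k + 2 * ρ), sq_nonneg b]
  have hsnn : 0 ≤ s := Real.sqrt_nonneg D
  have hs2 : s ^ 2 = D := Real.sq_sqrt hDpos.le
  have hsb : b < s := by
    nlinarith [sq_nonneg (k + 2 * ρ)]
  have hxpos : 0 < x := by
    have : 2 * ρ - 1 - 4 * a₁ = -b := by rw [hb]; ring
    rw [hx, this]; linarith
  have hroot : x ^ 2 + 4 * b * x - 4 * (4 * a₀ + 4 * ρ * k + k ^ 2) = 0 := by
    have hxs : x = 2 * (s - b) := by rw [hx]; ring_nf; linarith [hb]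
    nlinarith [hs2, hDpos]
  refine ⟨hxpos, hroot, fun y hy hyq => ?_⟩
  have hfac : (y - x) * (y + x + 4 * b) = 0 := by nlinarith
  have : y + x + 4 * b > 0 := by linarith
  have := mul_eq_zero.mp hfac
  rcases this with h | h
  · linarith
  · linarith
end

section
/- Let (Ω, ℱ, (ℱ_t)_{t≥0}, ℚ) be a filtered probability space, K > 0, S a positive martingale, and C an adapted process with almost surely continuous paths such that (S_t − K)₊ ≤ C_t ≤ S_t almost surely for every t ≥ 0. Suppose there exists a nondecreasing sequence of stopping times (τ_n)_{n≥1} with τ_n → ∞ almost surely such that for each n the stopped process C^{τ_n} (defined by C^{τ_n}_t := C_{t ∧ τ_n}) is a martingale. Then C itself is a martingale. -/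
open MeasureTheory Filter
open scoped NNReal Topology

private lemma measurable_comp_countable_range_aux {Ω : Type*} {m : MeasurableSpace Ω}
    {C : ℝ≥0 → Ω → ℝ} (hC : ∀ u, Measurable (C u))
    {φ : Ω → ℝ≥0} (hφ : Measurable φ) (hcr : (Set.range φ).Countable) :
    Measurable fun ω => C (φ ω) ω := by
  intro B hB
  have h : (fun ω => C (φ ω) ω) ⁻¹' B = ⋃ r ∈ Set.range φ, ((φ ⁻¹' {r}) ∩ C r ⁻¹' B) := by
    ext ω
    simp only [Set.mem_preimage, Set.mem_iUnion, Set.mem_inter_iff, Set.mem_singleton_iff,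
      Set.mem_range, exists_prop]
    constructor
    · intro hωB; exact ⟨φ ω, ⟨ω, rfl⟩, rfl, hωB⟩
    · rintro ⟨r, -, rfl, hωB⟩
      exact hωB
  rw [h]
  exact MeasurableSet.biUnion hcr fun r _ =>
    (hφ (measurableSet_singleton r)).inter (hC r hB)

set_option maxHeartbeats 2000000 in
/-- Localization form of Lemma 1: if `C` is adapted, continuous, sandwiched between
`(S − K)₊` and the positive martingale `S`, and there is a nondecreasing sequence of
stopping times `τ_n → ∞` a.s. such that each stopped process `C^{τ_n}` is a martingale,
then `C` itself is a martingale. -/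
theorem sandwiched_localized_martingale_is_martingale
    {Ω : Type*} {m : MeasurableSpace Ω} {μ : Measure Ω} [IsProbabilityMeasure μ]
    (ℱ : Filtration ℝ≥0 m) (K : ℝ) (hK : 0 < K)
    (S C : ℝ≥0 → Ω → ℝ)
    (hS : Martingale S ℱ μ)
    (hSpos : ∀ t, ∀ᵐ ω ∂μ, 0 < S t ω)
    (hCadp : Adapted ℱ C)
    (hCcont : ∀ᵐ ω ∂μ, Continuous fun t => C t ω)
    (hsand : ∀ t, ∀ᵐ ω ∂μ, max (S t ω - K) 0 ≤ C t ω ∧ C t ω ≤ S t ω)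
    (τ : ℕ → Ω → ℝ≥0)
    (hτ : ∀ n, IsStoppingTime ℱ (fun ω => (τ n ω : WithTop ℝ≥0)))
    (hτmono : ∀ n ω, τ n ω ≤ τ (n + 1) ω)
    (hτtop : ∀ᵐ ω ∂μ, Tendsto (fun n => τ n ω) atTop atTop)
    (hstop : ∀ n, Martingale (stoppedProcess C (fun ω => (τ n ω : WithTop ℝ≥0))) ℱ μ) :
    Martingale C ℱ μ := by
  -- a.e. nonnegativity of all paths of C simultaneously
  obtain ⟨D, hDc, hDd⟩ := TopologicalSpace.exists_countable_dense ℝ≥0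
  have hae0 : ∀ᵐ ω ∂μ, ∀ d ∈ D, 0 ≤ C d ω :=
    (ae_ball_iff hDc).2 fun d _ => (hsand d).mono fun ω h => le_trans (le_max_right _ _) h.1
  have hnonneg : ∀ᵐ ω ∂μ, ∀ u, 0 ≤ C u ω := by
    filter_upwards [hCcont, hae0] with ω hc h0 u
    obtain ⟨x, hxD, hx⟩ := mem_closure_iff_seq_limit.1 (hDd u)
    exact ge_of_tendsto (((hc.tendsto u).comp hx)) (Eventually.of_forall fun n => h0 (x n) (hxD n))
  have hCmeas : ∀ u, Measurable (C u) := fun u => (hCadp u).mono (ℱ.le u) le_rfl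
  have hCint : ∀ u, Integrable (C u) μ := by
    intro u
    refine (hS.integrable u).mono ((hCadp u).mono (ℱ.le u) le_rfl).aestronglyMeasurable ?_
    filter_upwards [hsand u, hnonneg] with ω hsw h0
    rw [Real.norm_eq_abs, Real.norm_eq_abs, abs_of_nonneg (h0 u)]
    exact le_trans hsw.2 (le_abs_self _)
  refine ⟨hCadp.stronglyAdapted, fun s t hst => ?_⟩
  have hτ' : ∀ n i, MeasurableSet[ℱ i] {ω | τ n ω ≤ i} := fun n i => by
    simpa only [WithTop.coe_le_coe] using (hτ n).measurableSet_le i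
  have hτlt : ∀ n i, MeasurableSet[ℱ i] {ω | τ n ω < i} := fun n i => by
    simpa only [WithTop.coe_lt_coe] using (hτ n).measurableSet_lt i
  -- notation
  set Y : ℕ → Ω → ℝ := fun n => stoppedProcess C (fun ω => (τ n ω : WithTop ℝ≥0)) t with hY
  have hYdef : ∀ n ω, Y n ω = C (min t (τ n ω)) ω := fun n ω => rfl
  have hYint : ∀ n, Integrable (Y n) μ := fun n => (hstop n).integrable t
  set A : ℕ → Set Ω := fun n => {ω | τ n ω < t} with hA
  have hAmeas : ∀ n, MeasurableSet (A n) := fun n => (ℱ.le t) _ (hτlt n t)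
  -- the key inequality : ∫_{A n} Y n ≤ ∫_{A n} S t
  have key : ∀ n, ∫ ω in A n, Y n ω ∂μ ≤ ∫ ω in A n, S t ω ∂μ := by
    intro n
    set σ : Ω → ℝ≥0 := fun ω => min t (τ n ω) with hσdef
    have hσ : IsStoppingTime ℱ (fun ω => (σ ω : WithTop ℝ≥0)) := by
      have := (hτ n).min_const t
      convert this using 1; funext ω; exact min_comm (t : WithTop ℝ≥0) (τ n ω)
    have hσ_le : ∀ ω, σ ω ≤ t := fun ω => min_le_left _ _
    -- dyadic upper discretization of σ
    set σk : ℕ → Ω → ℝ≥0 := fun k ω => min t ((⌈σ ω * 2 ^ k⌉₊ : ℝ≥0) / 2 ^ k) with hσkdef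
    have h2k : ∀ k : ℕ, (0 : ℝ≥0) < 2 ^ k := fun k => pow_pos two_pos k
    -- the ≤ i description for i < t
    have hle_iff : ∀ (k : ℕ) {i : ℝ≥0}, i < t → ∀ ω,
        (σk k ω ≤ i ↔ σ ω ≤ (⌊i * 2 ^ k⌋₊ : ℝ≥0) / 2 ^ k) := by
      intro k i hit ω
      have h1 : σk k ω ≤ i ↔ (⌈σ ω * 2 ^ k⌉₊ : ℝ≥0) / 2 ^ k ≤ i := by
        rw [hσkdef]
        simp only [min_le_iff]
        exact ⟨fun h => h.resolve_left (not_le.2 hit), fun h => Or.inr h⟩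
      rw [h1, div_le_iff₀ (h2k k), le_div_iff₀ (h2k k)]
      rw [← Nat.le_floor_iff zero_le', Nat.ceil_le]
    have hσk : ∀ k, IsStoppingTime ℱ (fun ω => (σk k ω : WithTop ℝ≥0)) := by
      intro k i
      simp only [WithTop.coe_le_coe]
      rcases le_or_gt t i with hti | hit
      · have : {ω | σk k ω ≤ i} = Set.univ := by
          ext ω
          simp only [Set.mem_setOf_eq, Set.mem_univ, iff_true]
          exact le_trans (min_le_left _ _) hti
        rw [this]; exact MeasurableSet.univ
      · have heq : {ω | σk k ω ≤ i} = {ω | σ ω ≤ (⌊i * 2 ^ k⌋₊ : ℝ≥0) / 2 ^ k} := by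
          ext ω; exact hle_iff k hit ω
        have hj : (⌊i * 2 ^ k⌋₊ : ℝ≥0) / 2 ^ k ≤ i := by
          rw [div_le_iff₀ (h2k k)]
          exact Nat.floor_le zero_le'
        rw [heq]
        exact ℱ.mono hj _ (by simpa only [WithTop.coe_le_coe] using hσ ((⌊i * 2 ^ k⌋₊ : ℝ≥0) / 2 ^ k))
    have hσ_le_σk : ∀ k ω, σ ω ≤ σk k ω := by
      intro k ω
      refine le_min (hσ_le ω) ?_
      rw [le_div_iff₀ (h2k k)]
      exact Nat.le_ceil _
    have hσk_le_t : ∀ k ω, σk k ω ≤ t := fun k ω => min_le_left _ _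
    have hσk_le_t' : ∀ k ω, (σk k ω : WithTop ℝ≥0) ≤ t := fun k ω =>
      WithTop.coe_le_coe.2 (hσk_le_t k ω)
    have hσk_tendsto : ∀ ω, Tendsto (fun k => σk k ω) atTop (𝓝 (σ ω)) := by
      intro ω
      have hub : ∀ k, σk k ω ≤ σ ω + (2 ^ k : ℝ≥0)⁻¹ := by
        intro k
        refine le_trans (min_le_right _ _) ?_
        rw [div_le_iff₀ (h2k k)]
        calc (⌈σ ω * 2 ^ k⌉₊ : ℝ≥0) ≤ σ ω * 2 ^ k + 1 := (Nat.ceil_lt_add_one zero_le').le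
          _ = (σ ω + (2 ^ k : ℝ≥0)⁻¹) * 2 ^ k := by
              rw [add_mul, inv_mul_cancel₀ (h2k k).ne']
      have hlim : Tendsto (fun k : ℕ => σ ω + (2 ^ k : ℝ≥0)⁻¹) atTop (𝓝 (σ ω)) := by
        have h2 : Tendsto (fun k : ℕ => ((2 : ℝ≥0) ^ k)⁻¹) atTop (𝓝 0) := by
          simp_rw [← inv_pow]
          exact NNReal.tendsto_pow_atTop_nhds_zero_of_lt_one (by rw [← NNReal.coe_lt_coe]; push_cast; norm_num)
        simpa using tendsto_const_nhds.add h2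
      exact tendsto_of_tendsto_of_tendsto_of_le_of_le tendsto_const_nhds hlim
        (fun k => hσ_le_σk k ω) hub
    have hσk_cr : ∀ k, (Set.range (σk k)).Countable := by
      intro k
      refine Set.Countable.mono ?_ (Set.countable_range fun m : ℕ => min t ((m : ℝ≥0) / 2 ^ k))
      rintro x ⟨ω, rfl⟩
      exact ⟨⌈σ ω * 2 ^ k⌉₊, rfl⟩
    -- A n is measurable for the σ-algebra of each σk k
    have hAk : ∀ k, MeasurableSet[(hσk k).measurableSpace] (A n) := by
      intro k
      rw [IsStoppingTime.measurableSet]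
      refine ⟨le_iSup (fun u => ℱ u) t _ (hτlt n t), fun i => ?_⟩
      simp only [WithTop.coe_le_coe]
      rcases le_or_gt t i with hti | hit
      · have : A n ∩ {ω | σk k ω ≤ i} = A n := by
          refine Set.inter_eq_left.2 fun ω _ => ?_
          exact le_trans (min_le_left _ _) hti
        rw [this]
        exact ℱ.mono hti _ (hτlt n t)
      · set j : ℝ≥0 := (⌊i * 2 ^ k⌋₊ : ℝ≥0) / 2 ^ k with hjdef
        have hji : j ≤ i := by
          rw [hjdef, div_le_iff₀ (h2k k)]
          exact Nat.floor_le zero_le'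
        have hjt : j < t := lt_of_le_of_lt hji hit
        have : A n ∩ {ω | σk k ω ≤ i} = {ω | τ n ω ≤ j} := by
          ext ω
          simp only [Set.mem_inter_iff, Set.mem_setOf_eq, hA]
          rw [hle_iff k hit ω]
          constructor
          · rintro ⟨hlt, hle⟩
            rw [hσdef] at hle
            simp only [min_le_iff] at hle
            exact hle.resolve_left (not_le.2 hjt)
          · intro hle
            exact ⟨lt_of_le_of_lt hle hjt, le_trans (min_le_right _ _) hle⟩
        rw [this]
        exact ℱ.mono hji _ (hτ' n j)
    -- optional sampling at the discretized times
    have hOS : ∀ k, stoppedValue S (fun ω => (σk k ω : WithTop ℝ≥0)) =ᵐ[μ]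
        μ[S t | (hσk k).measurableSpace] := fun k =>
      hS.stoppedValue_ae_eq_condExp_of_le_const_of_countable_range (hσk k)
        (hσk_le_t' k) (Set.Countable.mono (by rintro _ ⟨ω, rfl⟩; exact ⟨σk k ω, ⟨ω, rfl⟩, rfl⟩)
          ((hσk_cr k).image ((↑) : ℝ≥0 → WithTop ℝ≥0)))
    -- sandwich along the countable ranges
    have hsand_k : ∀ k, ∀ᵐ ω ∂μ, C (σk k ω) ω ≤ S (σk k ω) ω := by
      intro k
      have h1 : ∀ᵐ ω ∂μ, ∀ r ∈ Set.range (σk k), C r ω ≤ S r ω :=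
        (ae_ball_iff (hσk_cr k)).2 fun r _ => (hsand r).mono fun ω h => h.2
      filter_upwards [h1] with ω h1
      exact h1 _ ⟨ω, rfl⟩
    have hσk_meas : ∀ k, Measurable (σk k) := fun k =>
      (((hσk k).measurable_of_le (hσk_le_t' k)).mono (ℱ.le t) le_rfl).untopA
    have hCσk_meas : ∀ k, Measurable fun ω => C (σk k ω) ω := fun k =>
      measurable_comp_countable_range_aux hCmeas (hσk_meas k) (hσk_cr k)
    -- pass to lintegrals
    have step3 : ∀ k, ∫⁻ ω in A n, ENNReal.ofReal (C (σk k ω) ω) ∂μ ≤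
        ENNReal.ofReal (∫ ω in A n, S t ω ∂μ) := by
      intro k
      have hb : ∫⁻ ω in A n, ENNReal.ofReal (C (σk k ω) ω) ∂μ ≤
          ∫⁻ ω in A n, ENNReal.ofReal ((μ[S t | (hσk k).measurableSpace]) ω) ∂μ := by
        refine lintegral_mono_ae ?_
        filter_upwards [ae_restrict_of_ae (hsand_k k), ae_restrict_of_ae (hOS k)] with ω h1 h2
        refine ENNReal.ofReal_le_ofReal ?_
        rw [← h2]
        exact h1
      refine le_trans hb (le_of_eq ?_)
      have hint : Integrable (μ[S t | (hσk k).measurableSpace]) (μ.restrict (A n)) :=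
        integrable_condExp.restrict
      have hnn : 0 ≤ᵐ[μ.restrict (A n)] μ[S t | (hσk k).measurableSpace] :=
        ae_restrict_of_ae (condExp_nonneg ((hSpos t).mono fun ω h => h.le))
      rw [← ofReal_integral_eq_lintegral_ofReal hint hnn]
      congr 1
      exact setIntegral_condExp ((hσk k).measurableSpace_le_of_le (hσk_le_t' k))
        (hS.integrable t) (hAk k)
    -- Fatou
    have hYnn : 0 ≤ᵐ[μ.restrict (A n)] Y n :=
      ae_restrict_of_ae (hnonneg.mono fun ω h => h _)
    have step1 : ∫ ω in A n, Y n ω ∂μ =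
        (∫⁻ ω in A n, ENNReal.ofReal (Y n ω) ∂μ).toReal := by
      rw [integral_eq_lintegral_of_nonneg_ae hYnn
        (((hstop n).stronglyAdapted t).mono (ℱ.le t)).aestronglyMeasurable.restrict]
    have step2 : ∫⁻ ω in A n, ENNReal.ofReal (Y n ω) ∂μ ≤
        Filter.liminf (fun k => ∫⁻ ω in A n, ENNReal.ofReal (C (σk k ω) ω) ∂μ) atTop := by
      refine le_trans ?_ (lintegral_liminf_le fun k =>
        (ENNReal.measurable_ofReal.comp (hCσk_meas k)))
      refine lintegral_mono_ae ?_
      filter_upwards [ae_restrict_of_ae hCcont] with ω hc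
      have htd : Tendsto (fun k => ENNReal.ofReal (C (σk k ω) ω)) atTop
          (𝓝 (ENNReal.ofReal (Y n ω))) := by
        rw [hYdef]
        exact (ENNReal.continuous_ofReal.tendsto _).comp
          ((hc.tendsto (σ ω)).comp (hσk_tendsto ω))
      rw [htd.liminf_eq]
    have hStnn : 0 ≤ᵐ[μ.restrict (A n)] S t := ae_restrict_of_ae ((hSpos t).mono fun ω h => h.le)
    have hliminf_le : Filter.liminf
        (fun k => ∫⁻ ω in A n, ENNReal.ofReal (C (σk k ω) ω) ∂μ) atTop ≤
        ENNReal.ofReal (∫ ω in A n, S t ω ∂μ) := by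
      refine le_trans (liminf_le_liminf (Eventually.of_forall step3)) ?_
      simp
    rw [step1]
    calc (∫⁻ ω in A n, ENNReal.ofReal (Y n ω) ∂μ).toReal
        ≤ (ENNReal.ofReal (∫ ω in A n, S t ω ∂μ)).toReal :=
          ENNReal.toReal_mono ENNReal.ofReal_ne_top (le_trans step2 hliminf_le)
      _ = ∫ ω in A n, S t ω ∂μ := ENNReal.toReal_ofReal (integral_nonneg_of_ae hStnn)
  -- L¹ convergence of Y n to C t
  have habs_int : ∀ n, Integrable (fun ω => |Y n ω - C t ω|) μ :=
    fun n => ((hYint n).sub (hCint t)).abs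
  have hL1 : Tendsto (fun n => ∫ ω, |Y n ω - C t ω| ∂μ) atTop (𝓝 0) := by
    have hsplit : ∀ n, ∫ ω, |Y n ω - C t ω| ∂μ = ∫ ω in A n, |Y n ω - C t ω| ∂μ := by
      intro n
      rw [← integral_indicator (hAmeas n)]
      congr 1
      funext ω
      by_cases hω : ω ∈ A n
      · rw [Set.indicator_of_mem hω]
      · have hmin : min t (τ n ω) = t := min_eq_left (not_lt.1 hω)
        rw [Set.indicator_of_notMem hω, hYdef, hmin, sub_self, abs_zero]
    have hbnd : ∀ n, ∫ ω, |Y n ω - C t ω| ∂μ ≤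
        ∫ ω, (A n).indicator (fun ω => S t ω + C t ω) ω ∂μ := by
      intro n
      rw [hsplit n, integral_indicator (hAmeas n)]
      have h1 : ∫ ω in A n, |Y n ω - C t ω| ∂μ ≤ ∫ ω in A n, (Y n ω + C t ω) ∂μ := by
        refine integral_mono_ae ((habs_int n).restrict) (((hYint n).add (hCint t)).restrict) ?_
        filter_upwards [ae_restrict_of_ae hnonneg] with ω h0
        calc |Y n ω - C t ω| ≤ |Y n ω| + |C t ω| := abs_sub _ _
          _ = Y n ω + C t ω := by
              rw [abs_of_nonneg (by rw [hYdef]; exact h0 _), abs_of_nonneg (h0 t)]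
      refine le_trans h1 ?_
      rw [integral_add ((hYint n).restrict) ((hCint t).restrict),
        integral_add ((hS.integrable t).restrict) ((hCint t).restrict)]
      exact add_le_add_left (key n) _
    have htend : Tendsto (fun n => ∫ ω, (A n).indicator (fun ω => S t ω + C t ω) ω ∂μ)
        atTop (𝓝 0) := by
      have h0 : (0 : ℝ) = ∫ (_ : Ω), (0 : ℝ) ∂μ := by simp
      rw [h0]
      refine tendsto_integral_of_dominated_convergence (fun ω => |S t ω + C t ω|)
        (fun n => (((hS.integrable t).add (hCint t)).aestronglyMeasurable).indicator (hAmeas n))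
        ((hS.integrable t).add (hCint t)).abs ?_ ?_
      · intro n
        refine Eventually.of_forall fun ω => ?_
        simpa using norm_indicator_le_norm_self (fun ω => S t ω + C t ω) ω
      · filter_upwards [hτtop] with ω hω
        have hev : (fun n => (A n).indicator (fun ω => S t ω + C t ω) ω) =ᶠ[atTop]
            (fun _ => (0 : ℝ)) := by
          filter_upwards [hω.eventually_ge_atTop t] with n hn
          exact Set.indicator_of_notMem (by simpa [hA] using hn) _
        exact Tendsto.congr' hev.symm tendsto_const_nhds
    exact squeeze_zero (fun n => integral_nonneg fun ω => abs_nonneg _) hbnd htend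
  -- pass to conditional expectations
  have hcondL1 : Tendsto (fun n => ∫ ω, |(μ[Y n | ℱ s]) ω - (μ[C t | ℱ s]) ω| ∂μ)
      atTop (𝓝 0) := by
    refine squeeze_zero (fun n => integral_nonneg fun ω => abs_nonneg _)
      (fun n => ?_) hL1
    have hsub : (fun ω => (μ[Y n | ℱ s]) ω - (μ[C t | ℱ s]) ω) =ᵐ[μ]
        μ[(fun ω => Y n ω - C t ω) | ℱ s] := (condExp_sub (hYint n) (hCint t) (ℱ s)).symm
    calc ∫ ω, |(μ[Y n | ℱ s]) ω - (μ[C t | ℱ s]) ω| ∂μ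
        = ∫ ω, |(μ[(fun ω => Y n ω - C t ω) | ℱ s]) ω| ∂μ :=
          integral_congr_ae (hsub.mono fun ω h => congrArg (fun z => |z|) (by simpa using h))
      _ ≤ ∫ ω, |Y n ω - C t ω| ∂μ := integral_abs_condExp_le _
  have hcond_meas : ∀ n, AEStronglyMeasurable (μ[Y n | ℱ s]) μ :=
    fun n => (stronglyMeasurable_condExp.mono (ℱ.le s)).aestronglyMeasurable
  have hcond_int : ∀ n, Integrable ((μ[Y n | ℱ s]) - (μ[C t | ℱ s])) μ :=
    fun n => integrable_condExp.sub integrable_condExp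
  have heLp : Tendsto (fun n => eLpNorm ((μ[Y n | ℱ s]) - (μ[C t | ℱ s])) 1 μ) atTop (𝓝 0) := by
    have heq : ∀ n, eLpNorm ((μ[Y n | ℱ s]) - (μ[C t | ℱ s])) 1 μ =
        ENNReal.ofReal (∫ ω, |(μ[Y n | ℱ s]) ω - (μ[C t | ℱ s]) ω| ∂μ) := by
      intro n
      rw [eLpNorm_one_eq_lintegral_enorm,
        ← ofReal_integral_norm_eq_lintegral_enorm (hcond_int n)]
      simp [Real.norm_eq_abs]
    simp_rw [heq]
    have := (ENNReal.continuous_ofReal.tendsto 0).comp hcondL1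
    simpa [Function.comp_def] using this
  have hTIM : TendstoInMeasure μ (fun n => μ[Y n | ℱ s]) atTop (μ[C t | ℱ s]) :=
    tendstoInMeasure_of_tendsto_eLpNorm one_ne_zero hcond_meas
      (stronglyMeasurable_condExp.mono (ℱ.le s)).aestronglyMeasurable heLp
  obtain ⟨ns, hns_mono, hns_ae⟩ := hTIM.exists_seq_tendsto_ae
  have h_gn_eq : ∀ n, μ[Y n | ℱ s] =ᵐ[μ] stoppedProcess C (fun ω => (τ n ω : WithTop ℝ≥0)) s :=
    fun n => (hstop n).condExp_ae_eq hst
  have hfinal : μ[C t | ℱ s] =ᵐ[μ] C s := by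
    filter_upwards [hns_ae, hτtop, ae_all_iff.2 fun k => h_gn_eq (ns k)] with ω h1 h2 h3
    have h2' : Tendsto (fun k => τ (ns k) ω) atTop atTop :=
      h2.comp hns_mono.tendsto_atTop
    have h4 : Tendsto (fun k => stoppedProcess C (fun ω => (τ (ns k) ω : WithTop ℝ≥0)) s ω) atTop (𝓝 (C s ω)) := by
      have hev : (fun k => stoppedProcess C (fun ω => (τ (ns k) ω : WithTop ℝ≥0)) s ω) =ᶠ[atTop]
          (fun _ => C s ω) := by
        filter_upwards [h2'.eventually_ge_atTop s] with k hk
        show C (min s (τ (ns k) ω)) ω = C s ω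
        rw [min_eq_left hk]
      exact Tendsto.congr' hev.symm tendsto_const_nhds
    have h5 : Tendsto (fun k => (μ[Y (ns k) | ℱ s]) ω) atTop (𝓝 (C s ω)) := by
      refine Tendsto.congr' ?_ h4
      filter_upwards with k
      rw [h3 k]
    exact (tendsto_nhds_unique h5 h1).symm
  exact hfinal
end

section
/- Let θ > 0, ψ ≥ 0 and k ∈ ℝ. Set A := √(θ² + ψ²k²), ω := (θ + A)/2 (so ω > 0), and define a := (1/2)·[(1 + θ/A)·(ψ − 4)(ψ + 4)/16 + ψ²k/(2A) + (ψ⁴k² + θ²ψ²)/(2A³)], b := −(1 + θ/A)·ψ/(2ω), c := −ψ²k/(2Aω). Then the no-drift condition holds exactly: a = ((b² + c²)/16)·ω² + ((b² + c² − 2c)/4)·ω − [((b² + c²)/4)·k² + c·k + 1]. -/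
set_option maxHeartbeats 1000000
/-- SSVI algebraic verification: with `θ > 0`, `ψ ≥ 0`, `A = √(θ² + ψ²k²)`,
`ω = (θ + A)/2`, and the SSVI coefficients `a, b, c` as in the paper, the no-drift
condition of the IRV master SDE holds exactly. -/
theorem ssvi_no_drift (θ ψ k : ℝ) (hθ : 0 < θ) (hψ : 0 ≤ ψ)
    (A ω a b c : ℝ)
    (hA : A = Real.sqrt (θ ^ 2 + ψ ^ 2 * k ^ 2))
    (hω : ω = (θ + A) / 2)
    (ha : a = (1 / 2) * ((1 + θ / A) * ((ψ - 4) * (ψ + 4)) / 16 + ψ ^ 2 * k / (2 * A)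
        + (ψ ^ 4 * k ^ 2 + θ ^ 2 * ψ ^ 2) / (2 * A ^ 3)))
    (hb : b = -(1 + θ / A) * ψ / (2 * ω))
    (hc : c = -(ψ ^ 2 * k) / (2 * A * ω)) :
    a = ((b ^ 2 + c ^ 2) / 16) * ω ^ 2 + ((b ^ 2 + c ^ 2 - 2 * c) / 4) * ω
        - (((b ^ 2 + c ^ 2) / 4) * k ^ 2 + c * k + 1) := by
  have hs : 0 < θ ^ 2 + ψ ^ 2 * k ^ 2 := by positivity
  have hApos : 0 < A := by rw [hA]; exact Real.sqrt_pos.mpr hs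
  have hA2 : A ^ 2 = θ ^ 2 + ψ ^ 2 * k ^ 2 := by rw [hA]; exact Real.sq_sqrt hs.le
  have hP : θ + A ≠ 0 := by positivity
  have hA0 : A ≠ 0 := ne_of_gt hApos
  have hω0 : ω ≠ 0 := by rw [hω]; positivity
  subst hω ha hb hc
  field_simp
  linear_combination ((-64) * θ ^ 2 * ψ ^ 2 + (-64) * A * ψ ^ 2 * k ^ 2 + (-96) * A * θ * ψ ^ 2 + (4) * A * θ ^ 2 * ψ ^ 2 + (-32) * A ^ 2 * ψ ^ 2 + (128) * A ^ 2 * θ + (8) * A ^ 2 * θ * ψ ^ 2 + (128) * A ^ 3 + (4) * A ^ 3 * ψ ^ 2) * hA2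
end

section
/- Let T > t be real numbers, X > 0, σ₁ ≠ 0, and v₁, v₂, k ∈ ℝ. Define u := (1/(T−t))·(1 − (σ₁² + k·σ₁·v₁ + (1/4)k²v₁² + (1/4)k²v₂²)/X) + ((T−t)·X/16 + 1/4)·(v₁² + v₂²) − (1/2)·σ₁·v₁, and set ω := (T−t)·X, b := v₂/σ₁, c := v₁/σ₁. Then −X + (T−t)·u·X = [((b² + c²)/16)·ω² + ((b² + c² − 2c)/4)·ω − (((b² + c²)/4)·k² + c·k + 1)]·σ₁². -/
/-- The Schweizer–Wissel drift restriction `u` on the implied variance `X` maps exactly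
onto the no-drift condition of the IRV master SDE with `ω = (T−t)X`, `b = v₂/σ₁`,
`c = v₁/σ₁`. -/
theorem schweizer_wissel_drift_maps_to_irv_no_drift
    (T t X σ₁ v₁ v₂ k : ℝ) (hTt : t < T) (hX : 0 < X) (hσ : σ₁ ≠ 0)
    (u ω b c : ℝ)
    (hu : u = (1 / (T - t)) * (1 - (σ₁ ^ 2 + k * σ₁ * v₁ + (1 / 4) * k ^ 2 * v₁ ^ 2
          + (1 / 4) * k ^ 2 * v₂ ^ 2) / X)
        + ((T - t) * X / 16 + 1 / 4) * (v₁ ^ 2 + v₂ ^ 2) - (1 / 2) * σ₁ * v₁)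
    (hω : ω = (T - t) * X)
    (hb : b = v₂ / σ₁)
    (hc : c = v₁ / σ₁) :
    -X + (T - t) * u * X
      = (((b ^ 2 + c ^ 2) / 16) * ω ^ 2 + ((b ^ 2 + c ^ 2 - 2 * c) / 4) * ω
          - (((b ^ 2 + c ^ 2) / 4) * k ^ 2 + c * k + 1)) * σ₁ ^ 2 := by
  have hT : T - t ≠ 0 := sub_ne_zero.2 hTt.ne'
  subst hu hω hb hc
  field_simp
  ring
end

section
/- Let 0 < K₁ < K₂ < K₃ and s ≥ K₃ be real numbers, and let n₁, n₁₂, n₂₃ ∈ (0,1) with n₁ ≤ 1 − n₁₂. Define c₁ := s − (1 − n₁)·K₁, c₂ := c₁ − n₁₂·(K₂ − K₁), c₃ := c₂ − n₂₃·n₁₂·(K₃ − K₂). Then all the static no-arbitrage conditions hold: (i) (s − Kᵢ)₊ < cᵢ < s for i = 1, 2, 3; (ii) −1 < (c₂ − c₁)/(K₂ − K₁) < 0 and −1 < (c₃ − c₂)/(K₃ − K₂) < 0; (iii) (c₂ − c₁)/(K₂ − K₁) ≤ (c₃ − c₂)/(K₃ − K₂); (iv) −1 < (c₁ − s)/K₁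 ≤ (c₂ − c₁)/(K₂ − K₁) < 0. -/
set_option maxHeartbeats 800000

/-- Pointwise content of the three-option sandwiched-martingale construction: with
`0 < K₁ < K₂ < K₃ ≤ s`, `n₁, n₁₂, n₂₃ ∈ (0,1)`, `n₁ ≤ 1 − n₁₂`, and
`c₁ = s − (1 − n₁)K₁`, `c₂ = c₁ − n₁₂(K₂ − K₁)`, `c₃ = c₂ − n₂₃n₁₂(K₃ − K₂)`, all the
Carr–Madan static no-arbitrage conditions hold. -/
theorem three_option_static_no_arbitrage
    (K₁ K₂ K₃ s : ℝ) (h₀ : 0 < K₁) (h₁₂ : K₁ < K₂) (h₂₃ : K₂ < K₃) (hs : K₃ ≤ s)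
    (n₁ n₁₂ n₂₃ : ℝ)
    (hn₁ : n₁ ∈ Set.Ioo (0 : ℝ) 1) (hn₁₂ : n₁₂ ∈ Set.Ioo (0 : ℝ) 1)
    (hn₂₃ : n₂₃ ∈ Set.Ioo (0 : ℝ) 1) (hc : n₁ ≤ 1 - n₁₂)
    (c₁ c₂ c₃ : ℝ)
    (hc₁ : c₁ = s - (1 - n₁) * K₁)
    (hc₂ : c₂ = c₁ - n₁₂ * (K₂ - K₁))
    (hc₃ : c₃ = c₂ - n₂₃ * n₁₂ * (K₃ - K₂)) :
    (max (s - K₁) 0 < c₁ ∧ c₁ < s) ∧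
    (max (s - K₂) 0 < c₂ ∧ c₂ < s) ∧
    (max (s - K₃) 0 < c₃ ∧ c₃ < s) ∧
    (-1 < (c₂ - c₁) / (K₂ - K₁) ∧ (c₂ - c₁) / (K₂ - K₁) < 0) ∧
    (-1 < (c₃ - c₂) / (K₃ - K₂) ∧ (c₃ - c₂) / (K₃ - K₂) < 0) ∧
    (c₂ - c₁) / (K₂ - K₁) ≤ (c₃ - c₂) / (K₃ - K₂) ∧
    (-1 < (c₁ - s) / K₁ ∧ (c₁ - s) / K₁ ≤ (c₂ - c₁) / (K₂ - K₁) ∧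
      (c₂ - c₁) / (K₂ - K₁) < 0) := by
  obtain ⟨hn₁0, hn₁1⟩ := hn₁
  obtain ⟨hn₁₂0, hn₁₂1⟩ := hn₁₂
  obtain ⟨hn₂₃0, hn₂₃1⟩ := hn₂₃
  have hK21 : (0:ℝ) < K₂ - K₁ := by linarith
  have hK32 : (0:ℝ) < K₃ - K₂ := by linarith
  have e1 : (c₂ - c₁) / (K₂ - K₁) = -n₁₂ := by
    rw [hc₂]; field_simp; ring
  have e2 : (c₃ - c₂) / (K₃ - K₂) = -(n₂₃ * n₁₂) := by
    rw [hc₃]; field_simp; ring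
  have e3 : (c₁ - s) / K₁ = -(1 - n₁) := by
    rw [hc₁]; field_simp; ring
  subst hc₁ hc₂ hc₃
  rw [e1, e2, e3]
  have hm : n₂₃ * n₁₂ < 1 := by nlinarith
  have key : (1 - n₁) * K₁ + n₁₂ * (K₂ - K₁) + n₂₃ * n₁₂ * (K₃ - K₂) < K₃ := by
    nlinarith [mul_pos hn₁0 h₀, mul_pos (by linarith : (0:ℝ) < 1 - n₁₂) hK21,
      mul_pos (by linarith : (0:ℝ) < 1 - n₂₃ * n₁₂) hK32]
  have p1 : (0:ℝ) < (1 - n₁) * K₁ := mul_pos (by linarith) h₀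
  have p2 : (0:ℝ) < n₁₂ * (K₂ - K₁) := mul_pos hn₁₂0 hK21
  have p3 : (0:ℝ) < n₂₃ * n₁₂ * (K₃ - K₂) := mul_pos (mul_pos hn₂₃0 hn₁₂0) hK32
  have q1 : (1 - n₁) * K₁ < K₁ := by nlinarith
  have q2 : n₂₃ * n₁₂ ≤ n₁₂ := by nlinarith
  refine ⟨⟨max_lt (by nlinarith) (by nlinarith), by nlinarith⟩,
    ⟨max_lt (by nlinarith) (by nlinarith), by nlinarith⟩,
    ⟨max_lt (by nlinarith) (by nlinarith), by nlinarith⟩,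
    ⟨by linarith, by linarith⟩, ⟨by linarith, by nlinarith⟩,
    by linarith, by linarith, by linarith, by linarith⟩
end
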